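/- arXiv:1902.00192 — 3 statements merged into one kernel-verified Lean document; each statement's English description precedes it below -/
import Mathlib

section
/- Let S ⊊ V, let φ be a realization, let W ⊆ V and t ∈ ℕ ∪ {∞}. For a full realization ψ and v ∈ V, let R^t_v(ψ) = {u ∈ V : there is a t-live-path from u to v in ψ}. Then Σ_{full ψ with φ ≺ ψ} Pr[ψ|φ] · |{v ∈ V \ S : R^t_v(ψ) ∩ S = ∅ and R^t_v(ψ) ∩ W ≠ ∅}| = Δf_t(S, W, φ). Equivalently, (|V| − |S|)·E[I(W ∩ R)] = Δf_t(S,W,φ), where R is the RR-set obtained by sampling a full realization ψ with law Pr[·|φ], choosing v uniformly at random from V \ S, and setting R = R^t_v(ψ) if R^t_v(ψ) ∩ S = ∅ and R = ∅ otherwise, and I(W ∩ R) is 1 if W ∩ R ≠ ∅ and 0 otherwise. -/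
open scoped Classical

variable {V : Type*}

/-- A `t`-live-path from `u` to `v`: a directed path with at most `t` edges, all of which lie
in the live-edge set `L` (every node is reached from itself by a path of 0 edges). -/
def LiveReach (L : Finset (V × V)) (t : ℕ∞) (u v : V) : Prop :=
  ∃ (n : ℕ) (f : ℕ → V), (n : ℕ∞) ≤ t ∧ f 0 = u ∧ f n = v ∧ ∀ i < n, (f i, f (i + 1)) ∈ L

/-- `A_t(S, ψ)`: the nodes reachable from `S` by a `t`-live-path in the full realization
whose live-edge set is `L`. -/
noncomputable def Active [Fintype V] (L : Finset (V × V)) (t : ℕ∞) (S : Finset V) : Finset V :=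
  Finset.univ.filter fun v => ∃ u ∈ S, LiveReach L t u v

/-- `Δ_t(S, W, ψ) = |A_t(S ∪ W, ψ)| − |A_t(S, ψ)|`, for the full realization with
live-edge set `L`. -/
noncomputable def marg [Fintype V] (L : Finset (V × V)) (t : ℕ∞) (S W : Finset V) : ℝ :=
  ((Active L t (S ∪ W)).card : ℝ) - ((Active L t S).card : ℝ)

/-- `Pr[ψ | φ]` for realizations `φ = (φL, φD) ≺ ψ = (ψL, ψD)`. -/
noncomputable def condPr (p : V × V → ℝ) (φL φD ψL ψD : Finset (V × V)) : ℝ :=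
  (∏ e ∈ ψL \ φL, p e) * ∏ e ∈ ψD \ φD, (1 - p e)

/-- The live-edge sets of the full realizations `ψ` with `φ ≺ ψ`, where `φ = (φL, φD)`.
(A full realization is determined by its live-edge set `T ⊆ E`; its dead set is `E \ T`.) -/
noncomputable def fullExts (E φL φD : Finset (V × V)) : Finset (Finset (V × V)) :=
  E.powerset.filter fun T => φL ⊆ T ∧ Disjoint φD T

/-- `Δf_t(S, W, φ) = Σ_{full ψ, φ ≺ ψ} Pr[ψ|φ] · Δ_t(S, W, ψ)`. -/
noncomputable def margf [Fintype V] (p : V × V → ℝ) (E φL φD : Finset (V × V)) (t : ℕ∞)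
    (S W : Finset V) : ℝ :=
  ∑ T ∈ fullExts E φL φD, condPr p φL φD T (E \ T) * marg T t S W

/-- `R^t_v(ψ)`: the nodes from which `v` is reachable via a `t`-live-path in the full
realization with live-edge set `T`. -/
noncomputable def RRset [Fintype V] (T : Finset (V × V)) (t : ℕ∞) (v : V) : Finset V :=
  Finset.univ.filter fun u => LiveReach T t u v

lemma liveReach_self (L : Finset (V × V)) (t : ℕ∞) (v : V) : LiveReach L t v v := by
  exact ⟨0, fun _ => v, by simp, rfl, rfl, by omega⟩

lemma mem_active_iff [Fintype V] (L : Finset (V × V)) (t : ℕ∞) (S : Finset V) (v : V) :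
    v ∈ Active L t S ↔ (RRset L t v ∩ S).Nonempty := by
  simp only [Active, RRset, Finset.mem_filter, Finset.mem_univ, true_and,
    Finset.Nonempty, Finset.mem_inter]
  tauto

/-- The generalized RR-set identity: for `S ⊊ V`,
`Σ_{full ψ, φ ≺ ψ} Pr[ψ|φ] · |{v ∈ V \ S : R^t_v(ψ) ∩ S = ∅ ∧ R^t_v(ψ) ∩ W ≠ ∅}|
  = Δf_t(S, W, φ)`, i.e. `(|V| − |S|) · E[I(W ∩ R)] = Δf_t(S, W, φ)`. -/
theorem stmt_4 [Fintype V] [Nonempty V] (E : Finset (V × V)) (p : V × V → ℝ)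
    (hp : ∀ e ∈ E, 0 < p e ∧ p e ≤ 1)
    (S W : Finset V) (hS : S ⊂ Finset.univ)
    (φL φD : Finset (V × V)) (hφE : φL ∪ φD ⊆ E) (hφdisj : Disjoint φL φD)
    (t : ℕ∞) :
    ∑ T ∈ fullExts E φL φD, condPr p φL φD T (E \ T) *
        ((Finset.univ.filter fun v =>
            v ∉ S ∧ RRset T t v ∩ S = ∅ ∧ RRset T t v ∩ W ≠ ∅).card : ℝ)
      = margf p E φL φD t S W := by
  unfold margf
  apply Finset.sum_congr rfl
  intro T _
  congr 1
  have hsub : Active T t S ⊆ Active T t (S ∪ W) := by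
    intro v hv
    rw [mem_active_iff] at *
    obtain ⟨u, hu⟩ := hv
    exact ⟨u, by simp only [Finset.mem_inter, Finset.mem_union] at *; tauto⟩
  have hset : (Finset.univ.filter fun v =>
      v ∉ S ∧ RRset T t v ∩ S = ∅ ∧ RRset T t v ∩ W ≠ ∅)
      = Active T t (S ∪ W) \ Active T t S := by
    ext v
    simp only [Finset.mem_filter, Finset.mem_univ, true_and, Finset.mem_sdiff,
      mem_active_iff, Finset.nonempty_iff_ne_empty, Finset.inter_union_distrib_left,
      not_not]
    constructor
    · rintro ⟨-, h1, h2⟩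
      refine ⟨by simp [h1]; exact h2, h1⟩
    · rintro ⟨h1, h2⟩
      have hvS : v ∉ S := fun hv =>
        (h2 ▸ Finset.notMem_empty v) (Finset.mem_inter.mpr
          ⟨by simpa [RRset] using liveReach_self T t v, hv⟩)
      exact ⟨hvS, h2, by simpa [h2] using h1⟩
  rw [hset, marg, Finset.card_sdiff_of_subset hsub]
  have := Finset.card_le_card hsub
  push_cast [Nat.cast_sub this]
  ring
end

section
/- Let I and J be finite index sets. For i ∈ I let (S_i, φ_i) be a status, and for j ∈ J let (S'_j, φ'_j) be a status together with a set T_j ⊆ V. Assume every full realization ψ satisfies φ_i ≺ ψ for exactly one i ∈ I, and φ'_j ≺ ψ for exactly one j ∈ J. Then Σ_{(i,j) ∈ I×J with φ_i and φ'_j compatible} Σ_{full ψ with φ_i⊕φ'_j ≺ ψ} Pr[ψ] · |A_∞(S_i ∪ S'_j ∪ T_j, ψ)| ≥ Σ_{j ∈ J} Σ_{full ψ with φ'_j ≺ ψ} Pr[ψ] · |A_∞(S'_j ∪ T_j, ψ)|. (This is the content of the lemma that concatenating a decision tree in front of another decision tree does not decrease the expected profit of the latter, F(T1 ⊕ T2)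 ≥ F(T2).) -/
/-!
Split every full realization `ψ` by the unique leaf `φ_i` of the first tree with `φ_i ≺ ψ`.
Then the right-hand side becomes a sum over the pairs `(i, j)` and the full `ψ` extending both
`φ_i` and `φ'_j`, which are exactly the full extensions of `φ_i ⊕ φ'_j` (and only compatible
pairs have such extensions). Termwise, `A_∞` is monotone in the seed set and `Pr[ψ] ≥ 0`.
-/

open scoped Classical

variable {V : Type*}

/-- `Pr[ψ]` for the full realization whose live-edge set is `T ⊆ E`. -/
noncomputable def totPr (p : V × V → ℝ) (E T : Finset (V × V)) : ℝ :=
  (∏ e ∈ T, p e) * ∏ e ∈ E \ T, (1 - p e)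

open Finset

theorem Finset.sum_eq_sum_sum_inter_of_existsUnique {α ι M : Type*} [DecidableEq α] [Fintype ι]
    [AddCommMonoid M] {s : Finset α} {t : ι → Finset α} (f : α → M)
    (h : ∀ a ∈ s, ∃! i, a ∈ t i) :
    ∑ a ∈ s, f a = ∑ i, ∑ a ∈ t i ∩ s, f a := by
  have hdisj : (↑(univ : Finset ι) : Set ι).PairwiseDisjoint fun i => t i ∩ s := by
    intro i _ i' _ hne
    refine disjoint_left.mpr fun a ha ha' => hne ?_
    obtain ⟨_, -, huniq⟩ := h a (mem_inter.mp ha).2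
    exact (huniq i (mem_inter.mp ha).1).trans (huniq i' (mem_inter.mp ha').1).symm
  have hcover : univ.biUnion (fun i => t i ∩ s) = s := by
    ext a
    simp only [mem_biUnion, mem_univ, mem_inter, true_and]
    exact ⟨fun ⟨_, _, ha⟩ => ha, fun ha => ((h a ha).exists.imp fun _ hi => ⟨hi, ha⟩)⟩
  rw [← sum_biUnion hdisj, hcover]

section Realizations

variable {E A B A' B' T : Finset (V × V)}

theorem mem_fullExts : T ∈ fullExts E A B ↔ T ⊆ E ∧ A ⊆ T ∧ Disjoint B T := by
  simp only [fullExts, mem_filter, mem_powerset]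

theorem fullExts_union :
    fullExts E (A ∪ A') (B ∪ B') = fullExts E A B ∩ fullExts E A' B' := by
  ext T
  simp only [mem_inter, mem_fullExts, union_subset_iff, disjoint_union_left]
  tauto

theorem disjoint_and_disjoint_of_mem_fullExts_union (h : T ∈ fullExts E (A ∪ A') (B ∪ B')) :
    Disjoint A B' ∧ Disjoint B A' := by
  rw [fullExts_union, mem_inter, mem_fullExts, mem_fullExts] at h
  obtain ⟨⟨-, hA, hB⟩, -, hA', hB'⟩ := h
  exact ⟨hB'.symm.mono_left hA, hB.mono_right hA'⟩

theorem totPr_nonneg {p : V × V → ℝ} (hp : ∀ e ∈ E, 0 ≤ p e ∧ p e ≤ 1) (hT : T ⊆ E) :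
    0 ≤ totPr p E T :=
  mul_nonneg (prod_nonneg fun e he => (hp e (hT he)).1)
    (prod_nonneg fun e he => sub_nonneg.mpr (hp e (mem_sdiff.mp he).1).2)

end Realizations

theorem active_mono [Fintype V] (L : Finset (V × V)) (t : ℕ∞) {S S' : Finset V}
    (hS : S ⊆ S') : Active L t S ⊆ Active L t S' := by
  intro v
  simp only [Active, mem_filter, mem_univ, true_and]
  exact fun ⟨u, hu, hr⟩ => ⟨u, hS hu, hr⟩

theorem stmt_8_general [Fintype V] (E : Finset (V × V)) (p : V × V → ℝ)
    (hp : ∀ e ∈ E, 0 < p e ∧ p e ≤ 1)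
    (I J : Type*) [Fintype I] [Fintype J]
    (Si : I → Finset V) (φL φD : I → Finset (V × V))
    (Sj' : J → Finset V) (φL' φD' : J → Finset (V × V))
    (Tj : J → Finset V)
    (hpartI : ∀ T ∈ E.powerset, ∃! i : I, T ∈ fullExts E (φL i) (φD i)) :
    ∑ ij ∈ (Finset.univ : Finset (I × J)).filter
        (fun ij => Disjoint (φL ij.1) (φD' ij.2) ∧ Disjoint (φD ij.1) (φL' ij.2)),
      ∑ T ∈ fullExts E (φL ij.1 ∪ φL' ij.2) (φD ij.1 ∪ φD' ij.2),
        totPr p E T * ((Active T ⊤ (Si ij.1 ∪ Sj' ij.2 ∪ Tj ij.2)).card : ℝ)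
    ≥ ∑ j : J, ∑ T ∈ fullExts E (φL' j) (φD' j),
        totPr p E T * ((Active T ⊤ (Sj' j ∪ Tj j)).card : ℝ) := by
  rw [ge_iff_le, sum_filter_of_ne fun _ _ hne => (exists_ne_zero_of_sum_ne_zero hne).elim
    fun _ hT => disjoint_and_disjoint_of_mem_fullExts_union hT.1, Fintype.sum_prod_type, sum_comm]
  refine sum_le_sum fun j _ => ?_
  rw [sum_eq_sum_sum_inter_of_existsUnique (s := fullExts E (φL' j) (φD' j))
    (t := fun i => fullExts E (φL i) (φD i)) _ fun T hT => hpartI T (filter_subset _ _ hT)]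
  refine sum_le_sum fun i _ => ?_
  rw [fullExts_union]
  refine sum_le_sum fun T hT => ?_
  have hPr : 0 ≤ totPr p E T := totPr_nonneg (fun e he => ⟨(hp e he).1.le, (hp e he).2⟩)
    (mem_fullExts.mp (mem_inter.mp hT).1).1
  have hAct : Active T ⊤ (Sj' j ∪ Tj j) ⊆ Active T ⊤ (Si i ∪ Sj' j ∪ Tj j) :=
    active_mono T ⊤ (union_subset_union subset_union_right subset_rfl)
  exact mul_le_mul_of_nonneg_left (by exact_mod_cast card_le_card hAct) hPr

/-- Concatenating a decision tree in front of another does not decrease the expected profit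
(`F(T1 ⊕ T2) ≥ F(T2)`): with `{φ_i}` and `{φ'_j}` the leaf realizations of two decision trees
(each partitioning the full realizations), statuses `(S_i, φ_i)`, `(S'_j, φ'_j)` and seed sets
`T_j`, we have
`Σ_{(i,j) compatible} Σ_{full ψ, φ_i⊕φ'_j ≺ ψ} Pr[ψ]·|A_∞(S_i ∪ S'_j ∪ T_j, ψ)|
  ≥ Σ_j Σ_{full ψ, φ'_j ≺ ψ} Pr[ψ]·|A_∞(S'_j ∪ T_j, ψ)|`. -/
theorem stmt_8 [Fintype V] [Nonempty V] (E : Finset (V × V)) (p : V × V → ℝ)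
    (hp : ∀ e ∈ E, 0 < p e ∧ p e ≤ 1)
    (I J : Type*) [Fintype I] [Fintype J]
    (Si : I → Finset V) (φL φD : I → Finset (V × V))
    (hφE : ∀ i, φL i ∪ φD i ⊆ E) (hφdisj : ∀ i, Disjoint (φL i) (φD i))
    (Sj' : J → Finset V) (φL' φD' : J → Finset (V × V))
    (hφE' : ∀ j, φL' j ∪ φD' j ⊆ E) (hφdisj' : ∀ j, Disjoint (φL' j) (φD' j))
    (Tj : J → Finset V)
    (hpartI : ∀ T ∈ E.powerset, ∃! i : I, T ∈ fullExts E (φL i) (φD i))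
    (hpartJ : ∀ T ∈ E.powerset, ∃! j : J, T ∈ fullExts E (φL' j) (φD' j)) :
    ∑ ij ∈ (Finset.univ : Finset (I × J)).filter
        (fun ij => Disjoint (φL ij.1) (φD' ij.2) ∧ Disjoint (φD ij.1) (φL' ij.2)),
      ∑ T ∈ fullExts E (φL ij.1 ∪ φL' ij.2) (φD ij.1 ∪ φD' ij.2),
        totPr p E T * ((Active T ⊤ (Si ij.1 ∪ Sj' ij.2 ∪ Tj ij.2)).card : ℝ)
    ≥ ∑ j : J, ∑ T ∈ fullExts E (φL' j) (φD' j),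
        totPr p E T * ((Active T ⊤ (Sj' j ∪ Tj j)).card : ℝ) :=
  stmt_8_general E p hp I J Si φL φD Sj' φL' φD' Tj hpartI
end

section
/- Let (S,φ) be a status and let {(S_j, φ_j)}_{j∈J} be a finite family of statuses such that: (a) φ ≺ φ_j for every j ∈ J; (b) every full realization ψ with φ ≺ ψ satisfies φ_j ≺ ψ for exactly one j ∈ J; and (c) for every j ∈ J, every full realization ψ with φ_j ≺ ψ, and every W ⊆ V, A_∞(S ∪ W, ψ) = A_∞(S_j ∪ W, ψ). Then Σ_{j∈J} Pr[φ_j|φ] · max_{v∈V} Δf_∞(S_j, {v}, φ_j) ≥ max_{v∈V} Δf_∞(S, {v}, φ). (This is the claim that, in terms of eventual influence, waiting to observe more diffusion rounds before selecting the next seed node is a dominant strategy, i.e., the regret ratio α_{∞,d}(U) is always at least 1; the family {(S_j,φ_j)} represents the possible statuses after further diffusion rounds following (S,φ).) -/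
open scoped Classical

variable {V : Type*}

lemma condPr_trans (p : V × V → ℝ) {φL φD ψL ψD χL χD : Finset (V × V)}
    (h1 : φL ⊆ ψL) (h2 : φD ⊆ ψD) (h3 : ψL ⊆ χL) (h4 : ψD ⊆ χD) :
    condPr p φL φD χL χD = condPr p φL φD ψL ψD * condPr p ψL ψD χL χD := by
  unfold condPr
  rw [← Finset.sdiff_union_sdiff_cancel h3 h1, ← Finset.sdiff_union_sdiff_cancel h4 h2,
    Finset.prod_union (Finset.sdiff_disjoint.mono_right Finset.sdiff_subset),
    Finset.prod_union (Finset.sdiff_disjoint.mono_right Finset.sdiff_subset)]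
  ring

lemma condPr_nonneg (p : V × V → ℝ) (E : Finset (V × V)) (hp : ∀ e ∈ E, 0 < p e ∧ p e ≤ 1)
    {φL φD ψL ψD : Finset (V × V)} (hL : ψL ⊆ E) (hD : ψD ⊆ E) :
    0 ≤ condPr p φL φD ψL ψD := by
  unfold condPr
  apply mul_nonneg
  · exact Finset.prod_nonneg fun e he =>
      (hp e (hL (Finset.mem_sdiff.1 he).1)).1.le
  · exact Finset.prod_nonneg fun e he => by
      linarith [(hp e (hD (Finset.mem_sdiff.1 he).1)).2]

/-- Waiting is a dominant strategy (the regret ratio `α_{∞,d}(U)` is at least 1): if the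
statuses `(S_j, φ_j)` refine `(S, φ)` (each `φ ≺ φ_j`, every full realization extending `φ`
extends exactly one `φ_j`, and the eventual influence from `S ∪ W` agrees with that from
`S_j ∪ W` on extensions of `φ_j`), then
`Σ_j Pr[φ_j|φ] · max_v Δf_∞(S_j, {v}, φ_j) ≥ max_v Δf_∞(S, {v}, φ)`. -/
theorem stmt_12 [Fintype V] [Nonempty V] (E : Finset (V × V)) (p : V × V → ℝ)
    (hp : ∀ e ∈ E, 0 < p e ∧ p e ≤ 1)
    (S : Finset V) (φL φD : Finset (V × V))
    (hφE : φL ∪ φD ⊆ E) (hφdisj : Disjoint φL φD)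
    (J : Type*) [Fintype J]
    (Sj : J → Finset V) (φjL φjD : J → Finset (V × V))
    (hφjE : ∀ j, φjL j ∪ φjD j ⊆ E) (hφjdisj : ∀ j, Disjoint (φjL j) (φjD j))
    (hprec : ∀ j, φL ⊆ φjL j ∧ φD ⊆ φjD j)
    (hpart : ∀ T ∈ fullExts E φL φD, ∃! j : J, T ∈ fullExts E (φjL j) (φjD j))
    (hsame : ∀ j, ∀ T ∈ fullExts E (φjL j) (φjD j), ∀ W : Finset V,
      Active T ⊤ (S ∪ W) = Active T ⊤ (Sj j ∪ W)) :
    ∑ j, condPr p φL φD (φjL j) (φjD j) *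
        Finset.univ.sup' Finset.univ_nonempty
          (fun v => margf p E (φjL j) (φjD j) ⊤ (Sj j) {v})
      ≥ Finset.univ.sup' Finset.univ_nonempty (fun v => margf p E φL φD ⊤ S {v}) := by
  -- sub-extensions lie in fullExts E φL φD
  have hsub : ∀ j, fullExts E (φjL j) (φjD j) ⊆ fullExts E φL φD := by
    intro j T hT
    simp only [fullExts, Finset.mem_filter, Finset.mem_powerset] at hT ⊢
    exact ⟨hT.1, (hprec j).1.trans hT.2.1, hT.2.2.mono_left (hprec j).2⟩
  -- key: for every v, margf for (S,φ) decomposes along the partition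
  have key : ∀ v : V, margf p E φL φD ⊤ S {v}
      = ∑ j, condPr p φL φD (φjL j) (φjD j) * margf p E (φjL j) (φjD j) ⊤ (Sj j) {v} := by
    intro v
    have : ∀ j, condPr p φL φD (φjL j) (φjD j) * margf p E (φjL j) (φjD j) ⊤ (Sj j) {v}
        = ∑ T ∈ fullExts E φL φD,
            if T ∈ fullExts E (φjL j) (φjD j) then
              condPr p φL φD T (E \ T) * marg T ⊤ S {v} else 0 := by
      intro j
      rw [Finset.sum_ite_mem, Finset.inter_eq_right.2 (hsub j), margf, Finset.mul_sum]
      apply Finset.sum_congr rfl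
      intro T hT
      simp only [fullExts, Finset.mem_filter, Finset.mem_powerset] at hT
      have hDj : φjD j ⊆ E \ T :=
        Finset.subset_sdiff.2 ⟨(Finset.union_subset_iff.1 (hφjE j)).2, hT.2.2⟩
      have hmarg : marg T ⊤ S {v} = marg T ⊤ (Sj j) {v} := by
        have h1 := hsame j T (by
          simp only [fullExts, Finset.mem_filter, Finset.mem_powerset]
          exact hT) {v}
        have h2 := hsame j T (by
          simp only [fullExts, Finset.mem_filter, Finset.mem_powerset]
          exact hT) ∅
        simp only [Finset.union_empty] at h2
        rw [marg, marg, h1, h2]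
      rw [hmarg, condPr_trans p (hprec j).1 (hprec j).2 hT.2.1 hDj, mul_assoc]
    rw [Finset.sum_congr rfl fun j _ => this j, Finset.sum_comm, margf]
    apply Finset.sum_congr rfl
    intro T hT
    obtain ⟨j₀, hj₀, huniq⟩ := hpart T hT
    rw [Finset.sum_eq_single j₀]
    · simp [hj₀]
    · intro j _ hne
      simp only [ite_eq_right_iff]
      intro hTj
      exact absurd (huniq j hTj) hne
    · intro h; exact absurd (Finset.mem_univ j₀) h
  rw [ge_iff_le, Finset.sup'_le_iff]
  intro v _
  rw [key v]
  apply Finset.sum_le_sum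
  intro j _
  apply mul_le_mul_of_nonneg_left
  · exact Finset.le_sup' (fun v => margf p E (φjL j) (φjD j) ⊤ (Sj j) {v}) (Finset.mem_univ v)
  · exact condPr_nonneg p E hp (Finset.union_subset_iff.1 (hφjE j)).1
      (Finset.union_subset_iff.1 (hφjE j)).2
end
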